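/- arXiv:2009.06597 — 2 statements merged into one kernel-verified Lean document; each statement's English description precedes it below -/
import Mathlib

section
/- As formal power series, (-q;q^2)_\infty/(q;q^2)_\infty = \frac{(-q^2;q^2)_\infty}{(q^2;q^2)_\infty} \sum_{n=-\infty}^{\infty} q^{n^2}. -/
open PowerSeries Finset

/-- Formal infinite product of power series `F 0 * F 1 * ⋯`, well defined when
`F k ≡ 1 (mod X^(k+1))`: the coefficient of `X^n` is that of the partial product
of the first `n+1` factors. -/
noncomputable def iProd (F : ℕ → PowerSeries ℚ) : PowerSeries ℚ :=
  PowerSeries.mk fun n => PowerSeries.coeff n (∏ k ∈ Finset.range (n + 1), F k)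

/-- `(-q; q)_∞ = ∏_{k≥1} (1 + q^k)` -/
noncomputable def P₁ : PowerSeries ℚ := iProd fun k => 1 + (X : PowerSeries ℚ) ^ (k + 1)
/-- `(q; q)_∞ = ∏_{k≥1} (1 - q^k)` -/
noncomputable def P₂ : PowerSeries ℚ := iProd fun k => 1 - (X : PowerSeries ℚ) ^ (k + 1)
/-- `(-q²; q²)_∞ = ∏_{k≥1} (1 + q^{2k})` -/
noncomputable def P₃ : PowerSeries ℚ := iProd fun k => 1 + (X : PowerSeries ℚ) ^ (2 * k + 2)
/-- `(q²; q²)_∞ = ∏_{k≥1} (1 - q^{2k})` -/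
noncomputable def P₄ : PowerSeries ℚ := iProd fun k => 1 - (X : PowerSeries ℚ) ^ (2 * k + 2)
/-- `(-q; q²)_∞ = ∏_{k≥0} (1 + q^{2k+1})` -/
noncomputable def P₅ : PowerSeries ℚ := iProd fun k => 1 + (X : PowerSeries ℚ) ^ (2 * k + 1)
/-- `(q; q²)_∞ = ∏_{k≥0} (1 - q^{2k+1})` -/
noncomputable def P₆ : PowerSeries ℚ := iProd fun k => 1 - (X : PowerSeries ℚ) ^ (2 * k + 1)

/-- The Jacobi theta series `∑_{n ∈ ℤ} q^{n²}`. -/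
noncomputable def theta : PowerSeries ℚ :=
  PowerSeries.mk fun m => ∑ᶠ n : ℤ, if n ^ 2 = (m : ℤ) then (1 : ℚ) else 0

/-- The signed theta series `∑_{n ∈ ℤ} (-1)^n q^{n²}`. -/
noncomputable def thetaSigned : PowerSeries ℚ :=
  PowerSeries.mk fun m => ∑ᶠ n : ℤ, if n ^ 2 = (m : ℤ) then ((-1 : ℚ) ^ n) else 0

/-! Gauss's identity `θ = (-q;q²)_∞² (q²;q²)_∞` comes from the finite Jacobi triple product
`∏_{k<N} (1 + q^{2k+1})² = ∑_{j=0}^{2N} q^{(j-N)²} [2N, j]_{q²}`: since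
`[2N, j]_{q²} (q²;q²)_j (q²;q²)_{2N-j} = (q²;q²)_{2N}` and all these Pochhammer symbols agree modulo
`q^{2 min(j, 2N-j) + 2}`, the product `[2N, j]_{q²} (q²;q²)_N` is `1` up to an error that the factor
`q^{(j-N)²}` pushes past `q^{2N}`. Euler's identity `(-q²;q²)_∞ (q;q²)_∞ (-q;q²)_∞ = 1`, from
splitting `(q²;q²)_∞` into its factors of even and odd index, then turns the right-hand side
`(-q²;q²)_∞ (-q;q²)_∞²` into `(-q;q²)_∞ / (q;q²)_∞`. All identities are checked modulo `X ^ M`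
for every `M`. -/

theorem map_prod_range_eq_of_le {M N F : Type*} [CommMonoid M] [CommMonoid N] [FunLike F M N]
    [MonoidHomClass F M N] (φ : F) {f : ℕ → M} {a b : ℕ} (hab : a ≤ b)
    (hf : ∀ k, a ≤ k → φ (f k) = 1) :
    φ (∏ k ∈ range b, f k) = φ (∏ k ∈ range a, f k) := by
  rw [← prod_range_mul_prod_Ico f hab, map_mul, map_prod φ _ (Ico a b),
    prod_eq_one fun k hk => hf k (mem_Ico.mp hk).1, mul_one]

theorem prod_range_two_mul {M : Type*} [CommMonoid M] (f : ℕ → M) (N : ℕ) :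
    ∏ k ∈ range (2 * N), f k = ∏ k ∈ range N, (f (2 * k) * f (2 * k + 1)) := by
  induction N with
  | zero => simp
  | succ N ih => rw [show 2 * (N + 1) = 2 * N + 1 + 1 by ring, prod_range_succ, prod_range_succ,
      ih, prod_range_succ, mul_assoc]

section QSeries

variable {R : Type*} [CommRing R]

def qBinom (t : R) : ℕ → ℕ → R
  | _, 0 => 1
  | 0, _ + 1 => 0
  | n + 1, k + 1 => qBinom t n (k + 1) + t ^ (n - k) * qBinom t n k

def qPoch (t : R) (n : ℕ) : R :=
  ∏ k ∈ range n, (1 - t ^ (k + 1))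

variable (t : R)

@[simp]
theorem qBinom_zero_right (n : ℕ) : qBinom t n 0 = 1 := by
  cases n <;> rfl

theorem qBinom_succ_succ (n k : ℕ) :
    qBinom t (n + 1) (k + 1) = qBinom t n (k + 1) + t ^ (n - k) * qBinom t n k :=
  rfl

theorem qBinom_eq_zero_of_lt {n k : ℕ} (h : n < k) : qBinom t n k = 0 := by
  induction n generalizing k with
  | zero => obtain ⟨k, rfl⟩ := Nat.exists_eq_add_one_of_ne_zero (by omega : k ≠ 0); rfl
  | succ n ih =>
    obtain ⟨k, rfl⟩ := Nat.exists_eq_add_one_of_ne_zero (by omega : k ≠ 0)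
    rw [qBinom_succ_succ, ih (by omega), ih (by omega), mul_zero, add_zero]

@[simp]
theorem qBinom_self (n : ℕ) : qBinom t n n = 1 := by
  induction n with
  | zero => rfl
  | succ n ih => simp [qBinom_succ_succ, qBinom_eq_zero_of_lt t (Nat.lt_succ_self n), ih]

theorem one_sub_pow_mul_qBinom_succ (n k : ℕ) :
    (1 - t ^ (k + 1)) * qBinom t n (k + 1) = (1 - t ^ (n - k)) * qBinom t n k := by
  induction n generalizing k with
  | zero => simp [qBinom_eq_zero_of_lt]
  | succ n ih =>
    cases k with
    | zero =>
      have := ih 0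
      simp only [qBinom_succ_succ, qBinom_zero_right, Nat.sub_zero] at this ⊢
      linear_combination this
    | succ k =>
      rcases Nat.lt_or_ge k n with hkn | hkn
      · obtain ⟨d, rfl⟩ : ∃ d, n = k + 1 + d := ⟨n - (k + 1), by omega⟩
        have h1 := ih (k + 1)
        have h2 := ih k
        rw [show k + 1 + d - (k + 1) = d by omega] at h1
        rw [show k + 1 + d - k = d + 1 by omega] at h2
        rw [qBinom_succ_succ, qBinom_succ_succ, show k + 1 + d - (k + 1) = d by omega,
          show k + 1 + d - k = d + 1 by omega, show k + 1 + d + 1 - (k + 1) = d + 1 by omega]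
        linear_combination h1 + t ^ (d + 1) * h2
      · rw [qBinom_eq_zero_of_lt t (by omega : n + 1 < k + 1 + 1),
          Nat.sub_eq_zero_of_le (by omega : n + 1 ≤ k + 1)]
        ring

theorem qBinom_succ_succ' (n k : ℕ) :
    qBinom t (n + 1) (k + 1) = t ^ (k + 1) * qBinom t n (k + 1) + qBinom t n k := by
  linear_combination qBinom_succ_succ t n k + one_sub_pow_mul_qBinom_succ t n k

@[simp]
theorem qPoch_zero : qPoch t 0 = 1 := rfl

theorem qPoch_succ (n : ℕ) : qPoch t (n + 1) = qPoch t n * (1 - t ^ (n + 1)) :=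
  prod_range_succ _ _

theorem qBinom_mul_qPoch_mul_qPoch {n k : ℕ} (hk : k ≤ n) :
    qBinom t n k * qPoch t k * qPoch t (n - k) = qPoch t n := by
  induction n generalizing k with
  | zero =>
    obtain rfl : k = 0 := by omega
    simp
  | succ n ih =>
    rcases k with _ | j
    · simp
    rcases Nat.lt_or_ge j n with hjn | hjn
    · obtain ⟨d, rfl⟩ : ∃ d, n = j + 1 + d := ⟨n - (j + 1), by omega⟩
      have e1 := ih (k := j + 1) (by omega)
      have e2 := ih (k := j) (by omega)
      rw [show j + 1 + d - (j + 1) = d by omega, qPoch_succ t j] at e1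
      rw [show j + 1 + d - j = d + 1 by omega, qPoch_succ t d] at e2
      rw [qBinom_succ_succ, show j + 1 + d - j = d + 1 by omega,
        show j + 1 + d + 1 - (j + 1) = d + 1 by omega, qPoch_succ t d, qPoch_succ t j,
        qPoch_succ t (j + 1 + d)]
      linear_combination (1 - t ^ (d + 1)) * e1 + t ^ (d + 1) * (1 - t ^ (j + 1)) * e2
    · obtain rfl : j = n := by omega
      simp

theorem sum_range_mul_qBinom_succ (f : ℕ → R) (m : ℕ) :
    ∑ j ∈ range (m + 2), f j * qBinom t (m + 1) j
      = ∑ j ∈ range (m + 1), (f j + f (j + 1) * t ^ (m - j)) * qBinom t m j := by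
  rw [sum_range_succ' (fun j => f j * qBinom t (m + 1) j)]
  simp only [qBinom_succ_succ, mul_add, add_mul, sum_add_distrib]
  rw [sum_range_succ (fun j => f (j + 1) * qBinom t m (j + 1)),
    sum_range_succ' (fun j => f j * qBinom t m j), qBinom_eq_zero_of_lt t (by omega : m < m + 1)]
  simp only [qBinom_zero_right, mul_zero, add_zero, mul_assoc]
  ring

theorem sum_range_mul_qBinom_succ' (f : ℕ → R) (m : ℕ) :
    ∑ j ∈ range (m + 2), f j * qBinom t (m + 1) j
      = ∑ j ∈ range (m + 1), (f j * t ^ j + f (j + 1)) * qBinom t m j := by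
  rw [sum_range_succ' (fun j => f j * qBinom t (m + 1) j)]
  simp only [qBinom_succ_succ', mul_add, add_mul, sum_add_distrib]
  rw [sum_range_succ (fun j => f (j + 1) * (t ^ (j + 1) * qBinom t m (j + 1))),
    sum_range_succ' (fun j => f j * t ^ j * qBinom t m j),
    qBinom_eq_zero_of_lt t (by omega : m < m + 1)]
  simp only [qBinom_zero_right, pow_zero, mul_zero, add_zero, mul_assoc]
  ring

theorem sq_prod_one_add_pow_odd_eq_sum (q : R) (N : ℕ) :
    (∏ k ∈ range N, (1 + q ^ (2 * k + 1))) ^ 2 =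
      ∑ j ∈ range (2 * N + 1), q ^ (((j : ℤ) - N).natAbs ^ 2) * qBinom (q ^ 2) (2 * N) j := by
  induction N with
  | zero => simp
  | succ N ih =>
    -- two Pascal steps write `[2N+2, j]` in terms of `[2N, j]`, `[2N, j-1]` and `[2N, j-2]`
    rw [prod_range_succ, mul_pow, ih, sum_mul, show 2 * (N + 1) + 1 = 2 * N + 1 + 2 by ring,
      show 2 * (N + 1) = 2 * N + 1 + 1 by ring, sum_range_mul_qBinom_succ,
      show 2 * N + 1 + 1 = 2 * N + 2 by ring, sum_range_mul_qBinom_succ']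
    refine sum_congr rfl fun j hj => ?_
    have hj : j ≤ 2 * N := Nat.lt_succ_iff.mp (mem_range.mp hj)
    have e1 : ((j : ℤ) - ↑(N + 1)).natAbs ^ 2 + 2 * j =
        ((j : ℤ) - N).natAbs ^ 2 + (2 * N + 1) := by
      zify; simp only [sq_abs]; ring
    have e2 : ((↑(j + 1) : ℤ) - ↑(N + 1)).natAbs ^ 2 = ((j : ℤ) - N).natAbs ^ 2 := by
      zify; simp only [sq_abs]; ring
    have e3 : ((↑(j + 1 + 1) : ℤ) - ↑(N + 1)).natAbs ^ 2 + 2 * (2 * N + 1 - (j + 1)) =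
        ((j : ℤ) - N).natAbs ^ 2 + (2 * N + 1) := by
      zify [(by omega : j + 1 ≤ 2 * N + 1)]; simp only [sq_abs]; ring
    have e4 : 2 * (2 * N + 1 - j + j) = (2 * N + 1) * 2 := by omega
    have m1 : q ^ ((j : ℤ) - ↑(N + 1)).natAbs ^ 2 * (q ^ 2) ^ j =
        q ^ ((j : ℤ) - N).natAbs ^ 2 * q ^ (2 * N + 1) := by
      rw [← pow_mul, ← pow_add, e1, pow_add]
    have m2 : (q ^ 2) ^ (2 * N + 1 - j) * (q ^ 2) ^ j = (q ^ (2 * N + 1)) ^ 2 := by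
      rw [← pow_add, ← pow_mul, e4, pow_mul]
    have m3 : q ^ ((↑(j + 1 + 1) : ℤ) - ↑(N + 1)).natAbs ^ 2 *
        (q ^ 2) ^ (2 * N + 1 - (j + 1)) = q ^ ((j : ℤ) - N).natAbs ^ 2 * q ^ (2 * N + 1) := by
      rw [← pow_mul, ← pow_add, e3, pow_add]
    rw [e2]
    linear_combination
      qBinom (q ^ 2) (2 * N) j * (-m1 - q ^ ((j : ℤ) - N).natAbs ^ 2 * m2 - m3)

theorem qPoch_sq (q : R) (n : ℕ) :
    qPoch (q ^ 2) n = ∏ k ∈ range n, (1 - q ^ (2 * k + 2)) := by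
  simp only [qPoch, ← pow_mul, mul_add, mul_one]

theorem qPoch_sq_two_mul (q : R) (N : ℕ) :
    qPoch (q ^ 2) (2 * N) = (∏ k ∈ range N, (1 + q ^ (2 * k + 2))) *
      (∏ k ∈ range N, (1 - q ^ (2 * k + 1))) * (∏ k ∈ range N, (1 + q ^ (2 * k + 1))) *
        qPoch (q ^ 2) N := by
  rw [qPoch_sq, qPoch_sq, prod_range_two_mul, ← prod_mul_distrib, ← prod_mul_distrib,
    ← prod_mul_distrib]
  refine prod_congr rfl fun k _ => ?_
  rw [show 2 * (2 * k) + 2 = 2 * (2 * k + 1) by ring,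
    show 2 * (2 * k + 1) + 2 = 2 * (2 * k + 2) by ring, pow_mul', pow_mul']
  ring

end QSeries

namespace PowerSeries

variable {R : Type*} [CommRing R]

noncomputable abbrev modXPow (M : ℕ) :
    R⟦X⟧ →+* R⟦X⟧ ⧸ Ideal.span {(X : R⟦X⟧) ^ M} :=
  Ideal.Quotient.mk _

theorem modXPow_X_pow {M e : ℕ} (h : M ≤ e) : modXPow M (X ^ e : R⟦X⟧) = 0 :=
  Ideal.Quotient.eq_zero_iff_mem.mpr (Ideal.mem_span_singleton.mpr (pow_dvd_pow X h))

theorem modXPow_eq_iff {M : ℕ} {f g : R⟦X⟧} :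
    modXPow M f = modXPow M g ↔ ∀ n < M, coeff n f = coeff n g := by
  simp only [Ideal.Quotient.eq, Ideal.mem_span_singleton, X_pow_dvd_iff, map_sub, sub_eq_zero]

theorem modXPow_mono {M M' : ℕ} (h : M' ≤ M) {f g : R⟦X⟧}
    (hfg : modXPow M f = modXPow M g) :
    modXPow M' f = modXPow M' g :=
  modXPow_eq_iff.mpr fun n hn => modXPow_eq_iff.mp hfg n (hn.trans_le h)

theorem modXPow_X_pow_mul {M : ℕ} {f g : R⟦X⟧} (hfg : modXPow M f = modXPow M g) (e : ℕ) :
    modXPow (M + e) (X ^ e * f) = modXPow (M + e) (X ^ e * g) := by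
  rw [Ideal.Quotient.eq, Ideal.mem_span_singleton] at hfg ⊢
  rw [← mul_sub, pow_add, mul_comm]
  exact mul_dvd_mul_left _ hfg

theorem eq_of_forall_modXPow_eq {f g : R⟦X⟧} (h : ∀ M, modXPow M f = modXPow M g) : f = g :=
  ext fun n => modXPow_eq_iff.mp (h (n + 1)) n n.lt_add_one

end PowerSeries

section Truncation

variable {R : Type*} [CommRing R]

theorem isUnit_qPoch_X_sq (n : ℕ) : IsUnit (qPoch (X ^ 2 : R⟦X⟧) n) := by
  simp [isUnit_iff_constantCoeff, qPoch]

theorem modXPow_qPoch_X_sq_eq {M a b : ℕ} (ha : M ≤ 2 * a + 2) (hb : M ≤ 2 * b + 2) :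
    modXPow M (qPoch (X ^ 2 : R⟦X⟧) a) = modXPow M (qPoch (X ^ 2) b) := by
  have key : ∀ {a b}, M ≤ 2 * a + 2 → a ≤ b →
      modXPow M (qPoch (X ^ 2 : R⟦X⟧) b) = modXPow M (qPoch (X ^ 2) a) := fun ha hab =>
    map_prod_range_eq_of_le _ hab fun k hk => by
      rw [map_sub, ← pow_mul, modXPow_X_pow (by omega), map_one, sub_zero]
  rcases le_total a b with hab | hab
  · exact (key ha hab).symm
  · exact key hb hab

theorem modXPow_qBinom_mul_qPoch {M n k a : ℕ} (hkn : k ≤ n) (hk : M ≤ 2 * k + 2)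
    (hnk : M ≤ 2 * (n - k) + 2) (ha : M ≤ 2 * a + 2) :
    modXPow M (qBinom (X ^ 2 : R⟦X⟧) n k * qPoch (X ^ 2) a) = 1 := by
  have h := congrArg (modXPow M) (qBinom_mul_qPoch_mul_qPoch (X ^ 2 : R⟦X⟧) hkn)
  rw [map_mul, map_mul, modXPow_qPoch_X_sq_eq hk ha, modXPow_qPoch_X_sq_eq hnk ha,
    modXPow_qPoch_X_sq_eq (a := n) (by omega) ha] at h
  rw [map_mul]
  exact ((isUnit_qPoch_X_sq a).map _).mul_right_cancel (by rw [h, one_mul])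

theorem modXPow_euler {M N : ℕ} (hM : M ≤ 2 * N + 2) :
    modXPow M ((∏ k ∈ range N, (1 + X ^ (2 * k + 2))) *
      (∏ k ∈ range N, (1 - X ^ (2 * k + 1))) * (∏ k ∈ range N, (1 + X ^ (2 * k + 1))) :
        R⟦X⟧) = 1 := by
  have h := congrArg (modXPow M) (qPoch_sq_two_mul (X : R⟦X⟧) N)
  rw [map_mul (modXPow M) _ (qPoch _ N),
    modXPow_qPoch_X_sq_eq (a := 2 * N) (b := N) (by omega) hM] at h
  exact ((isUnit_qPoch_X_sq N).map _).mul_right_cancel (by rw [← h, one_mul])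

end Truncation

theorem coeff_theta {N n : ℕ} (hn : n ≤ 2 * N) :
    coeff n theta =
      ∑ j ∈ range (2 * N + 1), if ((j : ℤ) - N).natAbs ^ 2 = n then 1 else 0 := by
  have hsub : (Function.support fun m : ℤ => if m ^ 2 = (n : ℤ) then (1 : ℚ) else 0) ⊆
      (range (2 * N + 1)).image (fun j : ℕ => (j : ℤ) - N) := by
    intro m hm
    have hm2 : m ^ 2 = n := by by_contra h; simp [h] at hm
    have hlo : -(N : ℤ) ≤ m := by nlinarith
    have hhi : m ≤ N := by nlinarith
    simp only [coe_image, coe_range, Set.mem_image, Set.mem_Iio]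
    exact ⟨(m + N).toNat, by omega, by omega⟩
  rw [theta, coeff_mk, finsum_eq_sum_of_support_subset _ hsub,
    sum_image fun a _ b _ h => by simpa using h]
  refine sum_congr rfl fun j _ => ?_
  simp only [← Int.natAbs_sq, ← Nat.cast_pow, Nat.cast_inj]

theorem modXPow_theta_eq_sum (N : ℕ) :
    modXPow (2 * N + 1) theta =
      modXPow (2 * N + 1) (∑ j ∈ range (2 * N + 1), X ^ (((j : ℤ) - N).natAbs ^ 2)) :=
  modXPow_eq_iff.mpr fun n hn => by
    simp [coeff_theta (by omega : n ≤ 2 * N), coeff_X_pow, eq_comm]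

theorem modXPow_theta_eq_prod {M N : ℕ} (hM : M ≤ 2 * N + 1) :
    modXPow M theta =
      modXPow M ((∏ k ∈ range N, (1 + X ^ (2 * k + 1))) ^ 2 * qPoch (X ^ 2) N) := by
  refine modXPow_mono hM ?_
  rw [modXPow_theta_eq_sum, sq_prod_one_add_pow_odd_eq_sum, sum_mul, map_sum, map_sum]
  refine sum_congr rfl fun j hj => ?_
  have hj : j ≤ 2 * N := Nat.lt_succ_iff.mp (mem_range.mp hj)
  generalize hd : ((j : ℤ) - N).natAbs = d
  have hbound : 2 * N + 1 ≤ 2 * (N - d) + 2 + d ^ 2 := by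
    rcases le_total d N with h | h
    · zify [h]; nlinarith [sq_nonneg ((d : ℤ) - 1)]
    · rw [Nat.sub_eq_zero_of_le h]; nlinarith
  have h := modXPow_X_pow_mul ((modXPow_qBinom_mul_qPoch (R := ℚ) (M := 2 * (N - d) + 2) (k := j)
    hj (by omega) (by omega) (by omega : _ ≤ 2 * N + 2)).trans (map_one _).symm) (d ^ 2)
  rw [mul_one] at h
  rw [mul_assoc]
  exact (modXPow_mono hbound h).symm

theorem modXPow_iProd {F : ℕ → ℚ⟦X⟧} (hF : ∀ k, modXPow (k + 1) (F k) = 1) {M N : ℕ}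
    (h : M ≤ N) : modXPow M (iProd F) = modXPow M (∏ k ∈ range N, F k) :=
  modXPow_eq_iff.mpr fun n hn => by
    rw [iProd, coeff_mk]
    refine modXPow_eq_iff.mp ?_ n n.lt_add_one
    refine (map_prod_range_eq_of_le _ (by omega) fun k hk => ?_).symm
    exact (modXPow_mono (by omega) ((hF k).trans (map_one _).symm)).trans (map_one _)

theorem constantCoeff_iProd (F : ℕ → ℚ⟦X⟧) :
    constantCoeff (iProd F) = constantCoeff (F 0) := by
  rw [← coeff_zero_eq_constantCoeff_apply, iProd, coeff_mk, prod_range_one,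
    coeff_zero_eq_constantCoeff_apply]

theorem P₅_mul_P₄_eq : P₅ * P₄ = P₃ * P₆ * theta := eq_of_forall_modXPow_eq fun M => by
  have h3 : modXPow M P₃ = modXPow M (∏ k ∈ range M, (1 + X ^ (2 * k + 2))) :=
    modXPow_iProd (fun k => by simp [modXPow_X_pow (by omega : k + 1 ≤ 2 * k + 2)]) le_rfl
  have h4 : modXPow M P₄ = modXPow M (qPoch (X ^ 2) M) := by
    rw [qPoch_sq]
    exact modXPow_iProd (fun k => by simp [modXPow_X_pow (by omega : k + 1 ≤ 2 * k + 2)]) le_rfl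
  have h5 : modXPow M P₅ = modXPow M (∏ k ∈ range M, (1 + X ^ (2 * k + 1))) :=
    modXPow_iProd (fun k => by simp [modXPow_X_pow (by omega : k + 1 ≤ 2 * k + 1)]) le_rfl
  have h6 : modXPow M P₆ = modXPow M (∏ k ∈ range M, (1 - X ^ (2 * k + 1))) :=
    modXPow_iProd (fun k => by simp [modXPow_X_pow (by omega : k + 1 ≤ 2 * k + 1)]) le_rfl
  have euler := modXPow_euler (R := ℚ) (by omega : M ≤ 2 * M + 2)
  rw [map_mul, map_mul, map_mul, h3, h4, h5, h6, modXPow_theta_eq_prod (by omega : M ≤ 2 * M + 1)]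
  simp only [map_mul, map_pow] at euler ⊢
  linear_combination -(modXPow M (∏ k ∈ range M, (1 + X ^ (2 * k + 1))) *
    modXPow M (qPoch (X ^ 2) M)) * euler

theorem opo_gf_theta : P₅ * P₆⁻¹ = P₃ * P₄⁻¹ * theta := by
  have h4 : constantCoeff P₄ ≠ 0 := by simp [P₄, constantCoeff_iProd]
  have h6 : constantCoeff P₆ ≠ 0 := by simp [P₆, constantCoeff_iProd]
  rw [mul_right_comm P₃, eq_mul_inv_iff_mul_eq h4, mul_right_comm, P₅_mul_P₄_eq,
    mul_right_comm P₃, mul_assoc, PowerSeries.mul_inv_cancel _ h6, mul_one]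
end

section
/- As formal power series, (q;q^2)_\infty/(-q;q^2)_\infty = \frac{(-q^2;q^2)_\infty}{(q^2;q^2)_\infty} \sum_{n=-\infty}^{\infty} (-1)^n q^{n^2}. -/
open PowerSeries Finset

/-!
Clearing denominators, the identity is Euler's `(-q²;q²)_∞ (-q;q²)_∞ (q;q²)_∞ = 1` together with
Gauss's `∑ (-1)^n q^{n²} = (q;q²)_∞² (q²;q²)_∞`. Both are `X`-adic limits of polynomial identities.
Euler's comes from `(p;p)_{2N} = (-p;p)_N (p;p²)_N (p;p)_N` with `p = q²`. Gauss's comes from Cauchy's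
`q`-binomial theorem `∏_{i<n} (x + y Q^i) = ∑_r Q^{r(r-1)/2} [n, r]_Q y^r x^{n-r}` at `Q = q²`,
`n = 2M`, `x = q^{2M}`, `y = -q`, which reads `∑_r (-1)^{r+M} q^{(r-M)²} [2M, r]_{q²} = (q;q²)_M²`.
Since `[2M, r]_{q²} (q²;q²)_M ≡ 1` modulo `q^{2 min(r, 2M-r) + 2}`, multiplying by `(q²;q²)_M`
turns the left-hand side into the truncated theta series modulo `q^{2M+1}`.
-/

section QAnalogues

variable {R : Type*} [CommRing R]

def qPochhammer (q : R) (n : ℕ) : R := ∏ i ∈ range n, (1 - q ^ (i + 1))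

theorem qPochhammer_succ (q : R) (n : ℕ) :
    qPochhammer q (n + 1) = qPochhammer q n * (1 - q ^ (n + 1)) :=
  prod_range_succ _ _

def qBinomial (q : R) : ℕ → ℕ → R
  | _, 0 => 1
  | 0, _ + 1 => 0
  | n + 1, k + 1 => qBinomial q n k + q ^ (k + 1) * qBinomial q n (k + 1)

@[simp] theorem qBinomial_zero_right (q : R) (n : ℕ) : qBinomial q n 0 = 1 := by
  cases n <;> rfl

theorem qBinomial_succ_succ (q : R) (n k : ℕ) :
    qBinomial q (n + 1) (k + 1) = qBinomial q n k + q ^ (k + 1) * qBinomial q n (k + 1) := rfl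

theorem qBinomial_eq_zero_of_lt (q : R) {n k : ℕ} (h : n < k) : qBinomial q n k = 0 := by
  induction n generalizing k with
  | zero => obtain ⟨k, rfl⟩ := Nat.exists_eq_add_of_lt h; rfl
  | succ n ih =>
    obtain ⟨k, rfl⟩ : ∃ k', k = k' + 1 := Nat.exists_eq_add_one_of_ne_zero (by omega)
    rw [qBinomial_succ_succ, ih (by omega), ih (by omega), mul_zero, add_zero]

theorem prod_add_mul_pow_eq_sum_qBinomial (q x : R) (n : ℕ) (y : R) :
    ∏ i ∈ range n, (x + y * q ^ i)
      = ∑ p ∈ antidiagonal n, q ^ p.1.choose 2 * qBinomial q n p.1 * y ^ p.1 * x ^ p.2 := by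
  induction n generalizing y with
  | zero => simp
  | succ n ih =>
    set f : ℕ × ℕ → R := fun p => q ^ p.1.choose 2 * qBinomial q n p.1 * (y * q) ^ p.1 * x ^ p.2
    have hx : x * ∑ p ∈ antidiagonal n, f p = x ^ (n + 1) + ∑ p ∈ antidiagonal n,
        q ^ (p.1 + 1).choose 2 * (q ^ (p.1 + 1) * qBinomial q n (p.1 + 1)) * y ^ (p.1 + 1)
          * x ^ p.2 := by
      calc x * ∑ p ∈ antidiagonal n, f p = ∑ p ∈ antidiagonal n, f (p.1, p.2 + 1) := by
            rw [mul_sum]; exact sum_congr rfl fun p _ => by simp only [f]; ring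
        _ = ∑ p ∈ antidiagonal (n + 1), f p := by
            rw [Finset.Nat.sum_antidiagonal_succ']
            simp [f, qBinomial_eq_zero_of_lt]
        _ = _ := by
            rw [Finset.Nat.sum_antidiagonal_succ]
            simp only [f]
            congr 1
            · simp
            · exact sum_congr rfl fun p _ => by ring
    have hshift : ∏ i ∈ range n, (x + y * q ^ (i + 1)) = ∏ i ∈ range n, (x + y * q * q ^ i) :=
      prod_congr rfl fun i _ => by ring
    rw [prod_range_succ', hshift, ih, Finset.Nat.sum_antidiagonal_succ, mul_comm, pow_zero, mul_one,
      add_mul, hx]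
    simp only [qBinomial_succ_succ, Nat.choose_succ_succ', Nat.choose_one_right]
    rw [mul_sum, add_assoc, ← sum_add_distrib]
    exact congrArg₂ (· + ·) (by simp) (sum_congr rfl fun p _ => by ring)

theorem prod_range_pow_sub_pow (q : R) (M : ℕ) :
    ∏ i ∈ range (2 * M), (q ^ (2 * M) - q ^ (2 * i + 1))
      = (-1) ^ M * q ^ (3 * M ^ 2) * (∏ k ∈ range M, (1 - q ^ (2 * k + 1))) ^ 2 := by
  induction M with
  | zero => simp
  | succ M ih =>
    have hshift : ∏ i ∈ range (2 * M + 1), (q ^ (2 * (M + 1)) - q ^ (2 * (i + 1) + 1))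
        = (q ^ 2) ^ (2 * M + 1) * ∏ i ∈ range (2 * M + 1), (q ^ (2 * M) - q ^ (2 * i + 1)) := by
      rw [← card_range (2 * M + 1), ← prod_const, card_range, ← prod_mul_distrib]
      exact prod_congr rfl fun i _ => by ring
    rw [show 2 * (M + 1) = 2 * M + 1 + 1 by ring, prod_range_succ',
      ← show 2 * (M + 1) = 2 * M + 1 + 1 by ring, hshift, prod_range_succ, ih, prod_range_succ]
    ring

theorem sum_qBinomial_eq_prod_sq [IsDomain R] {q : R} (hq : q ≠ 0) (M : ℕ) :
    ∑ r ∈ range (2 * M + 1),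
        (-1) ^ (r + M) * q ^ ((r : ℤ) - M).natAbs ^ 2 * qBinomial (q ^ 2) (2 * M) r
      = (∏ k ∈ range M, (1 - q ^ (2 * k + 1))) ^ 2 := by
  have hcauchy := prod_add_mul_pow_eq_sum_qBinomial (q ^ 2) (q ^ (2 * M)) (2 * M) (-q)
  rw [Finset.Nat.sum_antidiagonal_eq_sum_range_succ_mk] at hcauchy
  have hsign : ((-1 : R) ^ M) ^ 2 = 1 := by rw [← pow_mul, mul_comm, pow_mul]; simp
  have hterm : ∀ r ∈ range (2 * M + 1),
      (q ^ 2) ^ r.choose 2 * qBinomial (q ^ 2) (2 * M) r * (-q) ^ r * (q ^ (2 * M)) ^ (2 * M - r)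
        = (-1) ^ M * q ^ (3 * M ^ 2)
          * ((-1) ^ (r + M) * q ^ ((r : ℤ) - M).natAbs ^ 2 * qBinomial (q ^ 2) (2 * M) r) := by
    intro r hr
    have hexp : 2 * r.choose 2 + r + 2 * M * (2 * M - r) = 3 * M ^ 2 + ((r : ℤ) - M).natAbs ^ 2 := by
      qify [(by simp at hr; omega : r ≤ 2 * M)]
      rw [Nat.cast_choose_two, sq_abs]
      ring
    calc _ = (-1) ^ r * q ^ (2 * r.choose 2 + r + 2 * M * (2 * M - r))
              * qBinomial (q ^ 2) (2 * M) r := by ring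
      _ = _ := by
            rw [hexp]
            linear_combination (-(-1) ^ r * q ^ (3 * M ^ 2 + ((r : ℤ) - M).natAbs ^ 2)
              * qBinomial (q ^ 2) (2 * M) r) * hsign
  rw [Nat.succ_eq_add_one, sum_congr rfl hterm, ← mul_sum,
    prod_congr rfl fun i _ => show q ^ (2 * M) + -q * (q ^ 2) ^ i = q ^ (2 * M) - q ^ (2 * i + 1) by
      ring,
    prod_range_pow_sub_pow] at hcauchy
  exact (mul_left_cancel₀ (mul_ne_zero (pow_ne_zero _ (neg_ne_zero.2 one_ne_zero))
    (pow_ne_zero _ hq)) hcauchy).symm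

theorem dvd_prod_range_sub_prod_range {F : ℕ → R} {d : R} {a b : ℕ} (hab : a ≤ b)
    (hF : ∀ k, a ≤ k → d ∣ F k - 1) :
    d ∣ ∏ k ∈ range b, F k - ∏ k ∈ range a, F k := by
  induction b, hab using Nat.le_induction with
  | base => simp
  | succ b hab ih =>
    have h : ∏ k ∈ range (b + 1), F k - ∏ k ∈ range a, F k
        = (∏ k ∈ range b, F k - ∏ k ∈ range a, F k) + (∏ k ∈ range b, F k) * (F b - 1) := by
      rw [prod_range_succ]; ring
    rw [h]
    exact dvd_add ih (dvd_mul_of_dvd_right (hF b hab) _)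

theorem pow_dvd_qPochhammer_sub (q : R) (m n : ℕ) :
    q ^ (min m n + 1) ∣ qPochhammer q n - qPochhammer q m := by
  wlog h : m ≤ n generalizing m n
  · rw [min_comm, dvd_sub_comm]; exact this n m (by omega)
  exact dvd_prod_range_sub_prod_range h fun k hk => by
    simpa using pow_dvd_pow q (by omega : min m n + 1 ≤ k + 1)

/-- `[n, k]_q (q;q)_k = ∏_{i<k} (1 - q^{n-k+1+i})`, read modulo `q^{n-k+1}`. -/
theorem pow_dvd_qBinomial_mul_qPochhammer_self_sub_one (q : R) {n k : ℕ} (h : k ≤ n) :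
    q ^ (n - k + 1) ∣ qBinomial q n k * qPochhammer q k - 1 := by
  induction n generalizing k with
  | zero =>
    obtain rfl : k = 0 := by omega
    simp [qPochhammer]
  | succ n ih =>
    rcases k with _ | k
    · simp [qPochhammer]
    have hsplit : qBinomial q (n + 1) (k + 1) * qPochhammer q (k + 1) - 1
        = (qBinomial q n k * qPochhammer q k - 1) * (1 - q ^ (k + 1))
          + q ^ (k + 1) * (qBinomial q n (k + 1) * qPochhammer q (k + 1) - 1) := by
      rw [qBinomial_succ_succ, qPochhammer_succ]; ring
    rw [hsplit]
    refine dvd_add (dvd_mul_of_dvd_left (by simpa using ih (by omega : k ≤ n)) _) ?_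
    rcases (by omega : k + 1 ≤ n ∨ k = n) with hk | rfl
    · exact (pow_dvd_pow q (by omega)).trans
        (pow_add q (k + 1) (n - (k + 1) + 1) ▸ mul_dvd_mul_left _ (ih hk))
    · simp [qBinomial_eq_zero_of_lt]

theorem pow_dvd_qBinomial_mul_qPochhammer_sub_one (q : R) {n k s : ℕ} (h : k ≤ n)
    (hs : min k (n - k) ≤ s) : q ^ (min k (n - k) + 1) ∣ qBinomial q n k * qPochhammer q s - 1 := by
  have hsplit : qBinomial q n k * qPochhammer q s - 1
      = (qBinomial q n k * qPochhammer q k - 1)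
        + qBinomial q n k * (qPochhammer q s - qPochhammer q k) := by ring
  rw [hsplit]
  exact dvd_add
    ((pow_dvd_pow q (by omega)).trans (pow_dvd_qBinomial_mul_qPochhammer_self_sub_one q h))
    (dvd_mul_of_dvd_right ((pow_dvd_pow q (by omega)).trans (pow_dvd_qPochhammer_sub q k s)) _)

theorem pow_dvd_prod_sq_mul_qPochhammer_sub_sum [IsDomain R] {q : R} (hq : q ≠ 0) (M : ℕ) :
    q ^ (2 * M + 1) ∣ (∏ k ∈ range M, (1 - q ^ (2 * k + 1))) ^ 2 * qPochhammer (q ^ 2) M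
      - ∑ r ∈ range (2 * M + 1), (-1) ^ (r + M) * q ^ ((r : ℤ) - M).natAbs ^ 2 := by
  rw [← sum_qBinomial_eq_prod_sq hq, sum_mul, ← sum_sub_distrib]
  refine dvd_sum fun r hr => ?_
  have hr : r ≤ 2 * M := by simp at hr; omega
  set d := ((r : ℤ) - M).natAbs
  have hd : min r (2 * M - r) + d = M := by omega
  have hdvd := pow_dvd_qBinomial_mul_qPochhammer_sub_one (q ^ 2) hr (by omega : _ ≤ M)
  rw [← pow_mul] at hdvd
  have hexp : 2 * M + 1 ≤ d ^ 2 + 2 * (min r (2 * M - r) + 1) := by nlinarith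
  calc q ^ (2 * M + 1) ∣ q ^ (d ^ 2) * q ^ (2 * (min r (2 * M - r) + 1)) := by
        rw [← pow_add]; exact pow_dvd_pow q hexp
    _ ∣ (-1) ^ (r + M) * (q ^ (d ^ 2) * (qBinomial (q ^ 2) (2 * M) r * qPochhammer (q ^ 2) M - 1)) :=
        dvd_mul_of_dvd_right (mul_dvd_mul_left _ hdvd) _
    _ = _ := by ring

theorem qPochhammer_two_mul (p : R) (N : ℕ) :
    qPochhammer p (2 * N)
      = (∏ k ∈ range N, (1 + p ^ (k + 1)) * (1 - p ^ (2 * k + 1))) * qPochhammer p N := by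
  induction N with
  | zero => simp [qPochhammer]
  | succ N ih =>
    rw [show 2 * (N + 1) = 2 * N + 1 + 1 by ring, qPochhammer_succ, qPochhammer_succ, ih,
      prod_range_succ, qPochhammer_succ]
    ring

theorem prod_one_add_pow_mul_one_sub_pow [IsDomain R] {p : R} {N : ℕ}
    (hp : qPochhammer p N ≠ 0) :
    ∏ k ∈ range N, (1 + p ^ (k + 1)) * (1 - p ^ (2 * k + 1))
      = ∏ i ∈ range N, (1 - p ^ (N + i + 1)) := by
  refine mul_right_cancel₀ hp ?_
  rw [← qPochhammer_two_mul, two_mul, qPochhammer, prod_range_add, mul_comm, qPochhammer]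

end QAnalogues

theorem PowerSeries.eq_of_forall_X_pow_dvd_sub {R : Type*} [CommRing R] {f g : R⟦X⟧}
    (h : ∀ m, X ^ m ∣ f - g) : f = g := by
  ext n
  have := X_pow_dvd_iff.1 (h (n + 1)) n n.lt_succ_self
  rwa [map_sub, sub_eq_zero] at this

theorem PowerSeries.qPochhammer_ne_zero {R : Type*} [CommRing R] [Nontrivial R] {q : R⟦X⟧}
    (hq : constantCoeff q = 0) (n : ℕ) : qPochhammer q n ≠ 0 := fun h => by
  simpa [qPochhammer, hq] using congrArg constantCoeff h

theorem X_pow_dvd_iProd_sub_prod {F : ℕ → ℚ⟦X⟧} (hF : ∀ k, X ^ (k + 1) ∣ F k - 1) (m : ℕ) :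
    X ^ m ∣ iProd F - ∏ k ∈ range m, F k := by
  refine X_pow_dvd_iff.2 fun n hn => ?_
  have hstable := dvd_prod_range_sub_prod_range (d := X ^ (n + 1)) (by omega : n + 1 ≤ m)
    fun k hk => (pow_dvd_pow X (by omega)).trans (hF k)
  have := X_pow_dvd_iff.1 hstable n n.lt_succ_self
  rw [map_sub, sub_eq_zero] at this
  rw [map_sub, iProd, coeff_mk, this, sub_self]

theorem X_pow_dvd_iProd_one_add_X_pow_sub {e : ℕ → ℕ} (he : ∀ k, k < e k) (m : ℕ) :
    X ^ m ∣ iProd (fun k => 1 + X ^ e k) - ∏ k ∈ range m, (1 + X ^ e k) :=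
  X_pow_dvd_iProd_sub_prod (fun k => by simpa using pow_dvd_pow X (he k)) m

theorem X_pow_dvd_iProd_one_sub_X_pow_sub {e : ℕ → ℕ} (he : ∀ k, k < e k) (m : ℕ) :
    X ^ m ∣ iProd (fun k => 1 - X ^ e k) - ∏ k ∈ range m, (1 - X ^ e k) :=
  X_pow_dvd_iProd_sub_prod (fun k => by simpa using pow_dvd_pow X (he k)) m

theorem P₃_mul_P₅_mul_P₆ : P₃ * (P₅ * P₆) = 1 := by
  refine eq_of_forall_X_pow_dvd_sub fun m => ?_
  have h₃ := X_pow_dvd_iProd_one_add_X_pow_sub (e := fun k => 2 * k + 2) (fun k => by omega) m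
  have h₅ := X_pow_dvd_iProd_one_add_X_pow_sub (e := fun k => 2 * k + 1) (fun k => by omega) m
  have h₆ := X_pow_dvd_iProd_one_sub_X_pow_sub (e := fun k => 2 * k + 1) (fun k => by omega) m
  have hfinite : X ^ m ∣ (∏ k ∈ range m, (1 + (X : ℚ⟦X⟧) ^ (2 * k + 2)))
      * ((∏ k ∈ range m, (1 + X ^ (2 * k + 1))) * ∏ k ∈ range m, (1 - X ^ (2 * k + 1))) - 1 := by
    have hrw : ∏ k ∈ range m,
          (1 + (X : ℚ⟦X⟧) ^ (2 * k + 2)) * ((1 + X ^ (2 * k + 1)) * (1 - X ^ (2 * k + 1)))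
        = ∏ k ∈ range m, (1 + (X ^ 2) ^ (k + 1)) * (1 - (X ^ 2) ^ (2 * k + 1)) :=
      prod_congr rfl fun k _ => by ring
    rw [← prod_mul_distrib, ← prod_mul_distrib, hrw,
      prod_one_add_pow_mul_one_sub_pow (qPochhammer_ne_zero (by simp) m)]
    simpa using dvd_prod_range_sub_prod_range (F := fun i => 1 - (X ^ 2 : ℚ⟦X⟧) ^ (m + i + 1))
      (Nat.zero_le m) fun i _ => by
        simpa [← pow_mul] using pow_dvd_pow (X : ℚ⟦X⟧) (by omega : m ≤ 2 * (m + i + 1))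
  simpa [P₃, P₅, P₆] using dvd_add (dvd_mul_sub_mul h₃ (dvd_mul_sub_mul h₅ h₆)) hfinite

theorem X_pow_dvd_thetaSigned_sub (M : ℕ) :
    X ^ (M + 1) ∣ thetaSigned
      - ∑ r ∈ range (2 * M + 1), (-1) ^ (r + M) * X ^ ((r : ℤ) - M).natAbs ^ 2 := by
  refine X_pow_dvd_iff.2 fun m hm => ?_
  have hsupp : Function.support (fun n : ℤ => if n ^ 2 = (m : ℤ) then (-1 : ℚ) ^ n else 0)
      ⊆ ((range (2 * M + 1)).image fun r : ℕ => (r : ℤ) - M : Set ℤ) := by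
    intro n hn
    have hnm : n ^ 2 = m := by by_contra h; simp [h] at hn
    have h₁ := Int.le_self_sq n
    have h₂ := Int.le_self_sq (-n)
    rw [neg_sq] at h₂
    simp only [coe_image, coe_range, Set.mem_image, Set.mem_Iio]
    exact ⟨(n + M).toNat, by omega, by omega⟩
  rw [map_sub, sub_eq_zero, thetaSigned, coeff_mk, finsum_eq_sum_of_support_subset _ hsupp,
    sum_image fun _ _ _ _ h => by simpa using h, map_sum]
  refine sum_congr rfl fun r _ => ?_
  rw [← map_one (C (R := ℚ)), ← map_neg, ← map_pow, coeff_C_mul_X_pow]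
  have hsign : (-1 : ℚ) ^ ((r : ℤ) - M) = (-1) ^ (r + M) := by
    rw [zpow_sub₀ (by norm_num), zpow_natCast, zpow_natCast, div_eq_mul_inv, ← inv_pow, inv_neg_one,
      pow_add]
  have hsq : ((r : ℤ) - M) ^ 2 = m ↔ m = ((r : ℤ) - M).natAbs ^ 2 := by
    rw [← Int.natAbs_sq, eq_comm]
    norm_cast
  rw [hsign]
  exact if_congr hsq rfl rfl

theorem thetaSigned_eq : thetaSigned = P₆ ^ 2 * P₄ := by
  refine eq_of_forall_X_pow_dvd_sub fun M => ?_
  have h₆ := X_pow_dvd_iProd_one_sub_X_pow_sub (e := fun k => 2 * k + 1) (fun k => by omega) M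
  have h₄ : X ^ M ∣ P₄ - qPochhammer (X ^ 2) M := by
    simpa [P₄, qPochhammer, ← pow_mul, mul_add] using
      X_pow_dvd_iProd_one_sub_X_pow_sub (e := fun k => 2 * k + 2) (fun k => by omega) M
  have hθ := (pow_dvd_pow X (by omega : M ≤ M + 1)).trans (X_pow_dvd_thetaSigned_sub M)
  have hfinite := (pow_dvd_pow X (by omega : M ≤ 2 * M + 1)).trans
    (pow_dvd_prod_sq_mul_qPochhammer_sub_sum (X_ne_zero (R := ℚ)) M)
  convert dvd_sub (dvd_sub hθ hfinite) (dvd_mul_sub_mul (dvd_mul_sub_mul h₆ h₆) h₄) using 1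
  rw [P₆]
  ring

theorem opo_gf_theta_signed : P₆ * P₅⁻¹ = P₃ * P₄⁻¹ * thetaSigned := by
  have hP₅ : constantCoeff P₅ ≠ 0 := by
    refine left_ne_zero_of_mul_eq_one (b := constantCoeff (P₃ * P₆)) ?_
    rw [← map_mul, mul_left_comm, P₃_mul_P₅_mul_P₆, map_one]
  have hP₄ : constantCoeff P₄ ≠ 0 := by
    rw [← coeff_zero_eq_constantCoeff_apply, P₄, iProd, coeff_mk]
    simp
  have hinv₅ : P₅⁻¹ = P₃ * P₆ := by
    rw [PowerSeries.inv_eq_iff_mul_eq_one hP₅, ← P₃_mul_P₅_mul_P₆]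
    ring
  rw [hinv₅, thetaSigned_eq]
  calc P₆ * (P₃ * P₆) = P₃ * P₆ ^ 2 * (P₄⁻¹ * P₄) := by
        rw [PowerSeries.inv_mul_cancel _ hP₄]; ring
    _ = P₃ * P₄⁻¹ * (P₆ ^ 2 * P₄) := by ring
end
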